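/- arXiv:0708.0019 — 7 statements merged into one kernel-verified Lean document; each statement's English description precedes it below -/
import Mathlib

section
/- Let A be a well-ordered subset of the nonnegative real numbers which has an accumulation point in ℝ. For a positive integer m, let mA = {x_1 + x_2 + ⋯ + x_m : x_1, …, x_m ∈ A}. Then mA contains a well-ordered subset of ordinal type ω^m. -/
open Filter

/-- The ordinal type of a well-ordered subset of a linear order: the unique ordinal
order-isomorphic to it. -/
noncomputable def setOrdinalType {α : Type*} [LinearOrder α] (S : Set α) (h : S.IsWF) :
    Ordinal :=
  letI : WellFoundedLT S := ⟨h⟩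
  Ordinal.type ((· < ·) : S → S → Prop)

/-!
An accumulation point `x` of a well-ordered set `A ⊆ ℝ` is the limit of a strictly increasing
sequence `a₀ < a₁ < ⋯` in `A`: from above, `A` could only approach `x` along a strictly
decreasing sequence. Sums of `m` such terms realise `ω ^ m` by induction on `m`: placing a
copy of the construction for `m` inside each gap `(aₙ + m x, aₙ₊₁ + m x]`, translated by
`aₙ₊₁`, stacks `ω` copies of `ω ^ m` in increasing order.
-/

open Set Ordinal Topology
open scoped Pointwise

universe u

theorem Set.IsWF.notMem_closure_inter_Ioi {α : Type*} [LinearOrder α] [TopologicalSpace α]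
    [OrderTopology α] [FirstCountableTopology α] {A : Set α} (hA : A.IsWF) (x : α) :
    x ∉ closure (A ∩ Ioi x) := by
  intro hx
  obtain ⟨u, hu, -, -, huA⟩ :=
    (isGLB_of_mem_closure (fun _ hy => hy.2.le) hx).exists_seq_strictAnti_tendsto_of_notMem
      (fun h => lt_irrefl x h.2) (closure_nonempty_iff.1 ⟨x, hx⟩)
  exact isWF_iff_no_descending_seq.1 hA u hu fun n => (huA n).1

theorem Set.IsWF.exists_seq_strictMono_tendsto_of_accPt {α : Type*} [LinearOrder α]
    [TopologicalSpace α] [OrderTopology α] [FirstCountableTopology α] {A : Set α} (hA : A.IsWF)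
    {x : α} (hx : AccPt x (𝓟 A)) :
    ∃ a : ℕ → α, StrictMono a ∧ (∀ n, a n < x) ∧ Tendsto a atTop (𝓝 x) ∧ ∀ n, a n ∈ A := by
  have hx' : x ∈ closure (A ∩ Iio x) ∪ closure (A ∩ Ioi x) := by
    rw [← closure_union, ← inter_union_distrib_left, Iio_union_Ioi, ← sdiff_eq,
      mem_closure_iff_clusterPt, ← accPt_principal_iff_clusterPt]
    exact hx
  have hcl : x ∈ closure (A ∩ Iio x) := hx'.resolve_right (hA.notMem_closure_inter_Ioi x)
  obtain ⟨a, ha, hax, hlim, haA⟩ :=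
    (isLUB_of_mem_closure (fun _ hy => hy.2.le) hcl).exists_seq_strictMono_tendsto_of_notMem
      (fun h => lt_irrefl x h.2) (closure_nonempty_iff.1 ⟨x, hcl⟩)
  exact ⟨a, ha, hax, hlim, fun n => (haA n).1⟩

theorem Set.exists_fin_sum_eq_of_mem_nsmul {M : Type*} [AddCommMonoid M] {s : Set M} {a : M}
    {n : ℕ} (h : a ∈ n • s) : ∃ f : Fin n → M, (∀ i, f i ∈ s) ∧ a = ∑ i, f i := by
  obtain ⟨f, rfl⟩ := mem_nsmul.1 h
  exact ⟨fun i => f i, fun i => (f i).2, List.sum_ofFn⟩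

theorem strictMono_lex_of_mem_Ioc {α β : Type*} [Preorder α] [Preorder β] {f : ℕ → α → β}
    {b : ℕ → β} (hb : Monotone b) (hf : ∀ n, StrictMono (f n))
    (hfb : ∀ n w, f n w ∈ Ioc (b n) (b (n + 1))) :
    StrictMono fun p : ℕ ×ₗ α => f (ofLex p).1 (ofLex p).2 := by
  intro p q hpq
  rcases Prod.Lex.lt_iff.1 hpq with hlt | ⟨heq, hlt⟩
  · calc f (ofLex p).1 (ofLex p).2 ≤ b ((ofLex p).1 + 1) := (hfb _ _).2
      _ ≤ b (ofLex q).1 := hb hlt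
      _ < f (ofLex q).1 (ofLex q).2 := (hfb _ _).1
  · simp only [heq]
    exact hf _ hlt

theorem Ordinal.nonempty_toType_omega0_pow_succ_orderIso (m : ℕ) :
    Nonempty ((ω ^ (m + 1) : Ordinal.{0}).ToType ≃o ℕ ×ₗ (ω ^ m : Ordinal.{0}).ToType) := by
  have htype : typeLT (ℕ ×ₗ (ω ^ m : Ordinal.{0}).ToType) = ω ^ (m + 1) := by
    have := type_prod_lex ((· < ·) : (ω ^ m : Ordinal.{0}).ToType → _) ((· < ·) : ℕ → ℕ → Prop)
    rwa [type_toType, type_nat_lt, ← pow_succ] at this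
  rw [← type_toType (ω ^ (m + 1))] at htype
  exact (type_eq.1 htype.symm).map OrderIso.ofRelIsoLT

theorem setOrdinalType_range {α β : Type u} [LinearOrder α] [WellFoundedLT α] [LinearOrder β]
    {g : α → β} (hg : StrictMono g) :
    ∃ h : (range g).IsWF, setOrdinalType (range g) h = typeLT α := by
  let e : α ≃o range g := hg.orderIso g
  have : WellFoundedLT (range g) := e.symm.toOrderEmbedding.wellFoundedLT
  exact ⟨this.wf, e.ordinalType_congr.symm⟩

theorem exists_strictMono_toType_omega0_pow_of_tendsto {A : Set ℝ} {x : ℝ} {a : ℕ → ℝ}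
    (ha : StrictMono a) (hax : ∀ n, a n < x) (hlim : Tendsto a atTop (𝓝 x))
    (haA : ∀ n, a n ∈ A) (m : ℕ) {c : ℝ} (hc : c < m * x) :
    ∃ g : (ω ^ m : Ordinal.{0}).ToType → ℝ, StrictMono g ∧ ∀ w, g w ∈ m • A ∩ Ioc c (m * x) := by
  induction m generalizing c with
  | zero =>
    rw [pow_zero]
    refine ⟨fun _ => 0, Subsingleton.strictMono _, fun _ => ⟨Set.zero_mem_zero, ?_⟩⟩
    simpa using hc
  | succ m ih =>
    have hcx : c - m * x < x := by
      push_cast at hc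
      linarith
    obtain ⟨n₀, hn₀⟩ := (hlim.eventually_const_lt hcx).exists
    have hgap (n : ℕ) : a (n₀ + n) + m * x - a (n₀ + n + 1) < m * x := by
      have := ha (Nat.lt_succ_self (n₀ + n))
      linarith
    choose G hG hGA using fun n => ih (hgap n)
    have hGIoc (n : ℕ) (w : (ω ^ m : Ordinal.{0}).ToType) :
        a (n₀ + n + 1) + G n w ∈ Ioc (a (n₀ + n) + m * x) (a (n₀ + n + 1) + m * x) := by
      obtain ⟨-, hlo, hhi⟩ := hGA n w
      constructor <;> linarith
    have hmono : StrictMono fun p : ℕ ×ₗ (ω ^ m : Ordinal.{0}).ToType =>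
        a (n₀ + (ofLex p).1 + 1) + G (ofLex p).1 (ofLex p).2 :=
      strictMono_lex_of_mem_Ioc (fun i j hij => by simpa using ha.monotone (by omega))
        (fun n => (hG n).const_add _) hGIoc
    obtain ⟨e⟩ := nonempty_toType_omega0_pow_succ_orderIso m
    refine ⟨_ ∘ e, hmono.comp e.strictMono, fun w => ⟨?_, ?_⟩⟩
    · rw [succ_nsmul']
      exact add_mem_add (haA _) (hGA _ _).1
    · obtain ⟨hlo, hhi⟩ := hGIoc (ofLex (e w)).1 (ofLex (e w)).2
      have := ha.monotone (Nat.le_add_right n₀ (ofLex (e w)).1)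
      have := hax (n₀ + (ofLex (e w)).1 + 1)
      simp only [Function.comp_apply, mem_Ioc, Nat.cast_succ]
      constructor <;> linarith

theorem sums_contain_wellOrdered_subset_of_type_omega_pow_general
    (A : Set ℝ) (hWF : A.IsWF)
    (hacc : ∃ x : ℝ, AccPt x (𝓟 A))
    (m : ℕ) :
    ∃ T : Set ℝ, T ⊆ {x : ℝ | ∃ f : Fin m → ℝ, (∀ i, f i ∈ A) ∧ x = ∑ i, f i} ∧
      ∃ hT : T.IsWF, setOrdinalType T hT = Ordinal.omega0 ^ (m : Ordinal) := by
  obtain ⟨x, hx⟩ := hacc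
  obtain ⟨a, ha, hax, hlim, haA⟩ := hWF.exists_seq_strictMono_tendsto_of_accPt hx
  obtain ⟨g, hg, hgA⟩ :=
    exists_strictMono_toType_omega0_pow_of_tendsto ha hax hlim haA m (sub_one_lt (m * x))
  obtain ⟨hT, hTtype⟩ := setOrdinalType_range hg
  refine ⟨range g, ?_, hT, by rw [hTtype, type_toType, opow_natCast]⟩
  rintro _ ⟨w, rfl⟩
  exact exists_fin_sum_eq_of_mem_nsmul (hgA w).1

/-- Let `A` be a well-ordered subset of the nonnegative real numbers which has an accumulation
point in `ℝ`.  For a positive integer `m`, the set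
`mA = {x₁ + ⋯ + x_m ∣ x₁, …, x_m ∈ A}` contains a well-ordered subset of ordinal type `ω ^ m`. -/
theorem sums_contain_wellOrdered_subset_of_type_omega_pow
    (A : Set ℝ) (hA : A ⊆ Set.Ici (0 : ℝ)) (hWF : A.IsWF)
    (hacc : ∃ x : ℝ, AccPt x (𝓟 A))
    (m : ℕ) (hm : 0 < m) :
    ∃ T : Set ℝ, T ⊆ {x : ℝ | ∃ f : Fin m → ℝ, (∀ i, f i ∈ A) ∧ x = ∑ i, f i} ∧
      ∃ hT : T.IsWF, setOrdinalType T hT = Ordinal.omega0 ^ (m : Ordinal) :=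
  sums_contain_wellOrdered_subset_of_type_omega_pow_general A hWF hacc m
end

section
/- Let n, h ∈ ℕ and let S be a subsemigroup under addition of the nonnegative part of ℝ^n equipped with the lexicographic order. Suppose S is well-ordered (for the lexicographic order) of ordinal type ≤ ω^h. Then S has no accumulation point in ℝ^n for the Euclidean topology. -/
/-!
If `x` were an accumulation point, well-ordering and Bolzano–Weierstrass would give a
lexicographically increasing sequence in `S` converging to some `y`; from some index on it agrees
with `y` on the coordinates before some `i`, while its `i`-th coordinates `a j` increase to
`L = y i` without reaching it. Sums of `k + 1` terms of the sequence then all agree before `i`,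
and their `i`-th coordinates contain a lexicographic copy of `ℕ^(k + 1)`: its `j`-th block is
`a (j + 1)` plus a copy of `ℕ^k` placed in `(k L - (a (j + 1) - a j), k L]`, so that the blocks
are increasing in `j`. As `S` is closed under addition, it contains a copy of `ω ^ (h + 1)`.
-/

open Filter

/-- The lexicographic linear order on `ℝ^n`. -/
noncomputable instance lexPiRealLinearOrder (n : ℕ) : LinearOrder (Lex (Fin n → ℝ)) :=
  @Pi.Lex.linearOrder (Fin n) (fun _ => ℝ)
    inferInstance (inferInstanceAs (WellFoundedLT (Fin n))) (fun _ => inferInstance)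

open Set Ordinal Topology Metric
open scoped Pointwise

noncomputable def lexFinConsOrderIso (α : Type*) [LinearOrder α] (k : ℕ) :
    α ×ₗ Lex (Fin k → α) ≃o Lex (Fin (k + 1) → α) :=
  StrictMono.orderIsoOfSurjective (fun p => toLex (Fin.cons (ofLex p).1 (ofLex (ofLex p).2)))
    (fun _ _ hpq => (Fin.pi_lex_lt_cons_cons _).2 (Prod.Lex.lt_iff.1 hpq))
    (fun m => ⟨toLex (ofLex m 0, toLex (Fin.tail (ofLex m))), Fin.cons_self_tail _⟩)

theorem type_lex_fin_nat (k : ℕ) : typeLT (Lex (Fin k → ℕ)) = ω ^ (k : Ordinal) := by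
  induction k with
  | zero => simp
  | succ k ih =>
    refine (lexFinConsOrderIso ℕ k).ordinalType_congr.symm.trans ?_
    rw [Nat.cast_succ, opow_add_one, ← ih, ← type_nat_lt]
    exact type_prod_lex _ _

universe u

theorem typeLT_le_setOrdinalType {α β : Type u} [LinearOrder α] [LinearOrder β] [WellFoundedLT β]
    {S : Set α} (hS : S.IsWF) {f : β → α} (hf : StrictMono f) (hfS : ∀ b, f b ∈ S) :
    typeLT β ≤ setOrdinalType S hS := by
  let : WellFoundedLT S := ⟨hS⟩
  exact type_le_iff'.2
    ⟨(OrderEmbedding.ofStrictMono (fun b => (⟨f b, hfS b⟩ : S)) hf).ltEmbedding⟩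

theorem Set.Infinite.exists_strictMono_of_isWF {α : Type*} [LinearOrder α] {s : Set α}
    (hs : s.Infinite) (hwf : s.IsWF) : ∃ f : ℕ → α, StrictMono f ∧ ∀ j, f j ∈ s := by
  have : Infinite s := hs.to_subtype
  have : WellFoundedLT s := ⟨hwf⟩
  obtain ⟨f, hf | hf⟩ := Infinite.exists_strictMono_or_strictAnti s
  · exact ⟨fun j => f j, fun _ _ hab => hf hab, fun j => (f j).2⟩
  · exact absurd hf (not_strictAnti_of_wellFoundedLT f)

theorem nsmul_subset_of_add_mem {M : Type*} [AddMonoid M] {S T : Set M}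
    (hS : ∀ x ∈ S, ∀ y ∈ S, x + y ∈ S) (hT : T ⊆ S) {k : ℕ} (hk : k ≠ 0) : k • T ⊆ S := by
  obtain ⟨k, rfl⟩ := Nat.exists_eq_add_one_of_ne_zero hk
  induction k with
  | zero => rwa [zero_add, one_nsmul]
  | succ k ih =>
    rw [succ_nsmul]
    rintro _ ⟨x, hx, y, hy, rfl⟩
    exact hS _ (ih k.succ_ne_zero hx) _ (hT hy)

theorem map_eq_nsmul_of_mem_nsmul {F M N : Type*} [AddMonoid M] [AddMonoid N] [FunLike F M N]
    [AddMonoidHomClass F M N] (φ : F) {T : Set M} {c : N} (hT : ∀ x ∈ T, φ x = c) {k : ℕ}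
    {x : M} (hx : x ∈ k • T) : φ x = k • c := by
  have hφx : φ x ∈ k • (φ '' T) := image_nsmul φ T k ▸ mem_image_of_mem φ hx
  have hφT : φ '' T ⊆ {c} := image_subset_iff.2 hT
  rw [← mem_singleton_iff, ← nsmul_singleton]
  exact nsmul_subset_nsmul_left hφT hφx

theorem IsLUB.exists_strictMono_forall_mem_Ioo {α : Type*} [LinearOrder α] [TopologicalSpace α]
    [OrderTopology α] [FirstCountableTopology α] {A : Set α} {L b : α} (hL : IsLUB A L)
    (hLA : L ∉ A) (hb : b < L) : ∃ a : ℕ → α, StrictMono a ∧ ∀ j, a j ∈ A ∩ Ioo b L := by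
  have hA : A.Nonempty := by
    by_contra hA
    exact hb.not_ge (hL.2 fun a ha => absurd ⟨a, ha⟩ hA)
  obtain ⟨u, hu, hu_lt, hu_lim, hu_mem⟩ := hL.exists_seq_strictMono_tendsto_of_notMem hLA hA
  obtain ⟨N, hN⟩ := eventually_atTop.1 (hu_lim.eventually (Ioi_mem_nhds hb))
  exact ⟨fun j => u (j + N), hu.comp (strictMono_id.add_const N),
    fun j => ⟨hu_mem _, hN _ (Nat.le_add_left N j), hu_lt _⟩⟩

theorem exists_strictMono_lex_fin_nat_mem_nsmul {A : Set ℝ} {L : ℝ} (hL : IsLUB A L)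
    (hLA : L ∉ A) (k : ℕ) {ε : ℝ} (hε : 0 < ε) :
    ∃ f : Lex (Fin k → ℕ) → ℝ, StrictMono f ∧ ∀ m, f m ∈ k • A ∩ Ioc (k * L - ε) (k * L) := by
  induction k generalizing ε with
  | zero => exact ⟨0, Subsingleton.strictMono _, fun _ => by simp [hε]⟩
  | succ k ih =>
    obtain ⟨a, ha, haA⟩ := hL.exists_strictMono_forall_mem_Ioo hLA (sub_lt_self L hε)
    choose e he heA using fun j : ℕ => ih (sub_pos.2 (ha (Nat.lt_succ_self j)))
    let F : ℕ ×ₗ Lex (Fin k → ℕ) → ℝ := fun p => a ((ofLex p).1 + 1) + e (ofLex p).1 (ofLex p).2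
    have hF_mem : ∀ p, F p ∈ Ioc (a (ofLex p).1 + k * L) (a ((ofLex p).1 + 1) + k * L) := by
      intro p
      have := (heA (ofLex p).1 (ofLex p).2).2
      constructor <;> linarith [this.1, this.2]
    refine ⟨F ∘ (lexFinConsOrderIso ℕ k).symm, ?_, fun m => ?_⟩
    · refine StrictMono.comp (fun p q hpq => ?_) (lexFinConsOrderIso ℕ k).symm.strictMono
      rcases Prod.Lex.lt_iff.1 hpq with hlt | ⟨heq, hlt⟩
      · calc F p ≤ a ((ofLex p).1 + 1) + k * L := (hF_mem p).2
          _ ≤ a (ofLex q).1 + k * L := by gcongr; exact ha.monotone hlt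
          _ < F q := (hF_mem q).1
      · simp only [F, heq]
        exact (add_lt_add_iff_left _).2 (he _ hlt)
    · set p := (lexFinConsOrderIso ℕ k).symm m
      refine ⟨?_, ?_⟩
      · rw [succ_nsmul']
        exact add_mem_add (haA _).1 (heA _ _).1
      · have hp := hF_mem p
        have hlow := (haA (ofLex p).1).2.1
        have hhigh := (haA ((ofLex p).1 + 1)).2.2
        change F p ∈ Ioc (((k + 1 : ℕ) : ℝ) * L - ε) ((k + 1 : ℕ) * L)
        push_cast
        constructor <;> linarith [hp.1, hp.2]

theorem exists_lex_strictMono_tendsto_of_accPt {n : ℕ} {S : Set (Fin n → ℝ)}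
    (hWF : (toLex '' S : Set (Lex (Fin n → ℝ))).IsWF) {x : Fin n → ℝ} (hx : AccPt x (𝓟 S)) :
    ∃ w : ℕ → Fin n → ℝ, (∀ j, w j ∈ S) ∧ StrictMono (toLex ∘ w) ∧
      ∃ y, Tendsto w atTop (𝓝 y) := by
  have hinf : (closedBall x 1 ∩ S).Infinite :=
    Set.Infinite.of_accPt (hx.nhds_inter (closedBall_mem_nhds x one_pos))
  obtain ⟨u, hu, hu_mem⟩ := (hinf.image toLex.injective.injOn).exists_strictMono_of_isWF
    (hWF.mono (image_mono inter_subset_right))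
  have hu_mem' : ∀ j, ofLex (u j) ∈ closedBall x 1 ∩ S := by
    intro j
    obtain ⟨z, hz, rfl⟩ := hu_mem j
    exact hz
  obtain ⟨y, -, φ, hφ, hlim⟩ := (isCompact_closedBall x 1).tendsto_subseq fun j => (hu_mem' j).1
  exact ⟨ofLex ∘ u ∘ φ, fun j => (hu_mem' _).2, hu.comp hφ, y, hlim⟩

theorem exists_coord_isLUB_of_lex_strictMono_tendsto {n : ℕ} {w : ℕ → Fin n → ℝ}
    {y : Fin n → ℝ} (hw : StrictMono (toLex ∘ w)) (hy : Tendsto w atTop (𝓝 y)) :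
    ∃ (i : Fin n) (T : Set (Fin n → ℝ)), T ⊆ range w ∧ (∀ x ∈ T, ∀ l < i, x l = y l) ∧
      IsLUB ((· i) '' T) (y i) ∧ y i ∉ (· i) '' T := by
  have h_not_const : ∃ l, ¬ ∀ᶠ j in atTop, w j l = y l := by
    by_contra! h
    obtain ⟨N, hN⟩ := eventually_atTop.1 (eventually_all.2 h)
    exact (hw (Nat.lt_succ_self N)).ne (congrArg toLex ((funext (hN N le_rfl)).trans
      (funext (hN (N + 1) N.le_succ)).symm))
  obtain ⟨i, hi, hi_min⟩ := wellFounded_lt.has_min _ h_not_const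
  have h_pre : ∀ᶠ j in atTop, ∀ l < i, w j l = y l :=
    eventually_all.2 fun l => by
      by_cases hl : l < i
      · exact (not_not.1 (hi_min l · hl)).mono fun _ h _ => h
      · exact Eventually.of_forall fun _ h => absurd h hl
  obtain ⟨N, hN⟩ := eventually_atTop.1 h_pre
  set v : ℕ → ℝ := fun j => w (j + N) i
  have hv : Monotone v := by
    intro j j' hjj'
    by_contra! hlt
    exact (hw.monotone (Nat.add_le_add_right hjj' N)).not_gt
      ⟨i, fun l hl => (hN _ (Nat.le_add_left N j') l hl).trans
        (hN _ (Nat.le_add_left N j) l hl).symm, hlt⟩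
  have hv_lim : Tendsto v atTop (𝓝 (y i)) :=
    ((tendsto_pi_nhds.1 hy i).comp (tendsto_add_atTop_nat N))
  have hT : (· i) '' range (fun j => w (j + N)) = range v := (range_comp _ _).symm
  refine ⟨i, range fun j => w (j + N), range_comp_subset_range _ _,
    fun _ ⟨j, hj⟩ l hl => hj ▸ hN _ (Nat.le_add_left N j) l hl,
    hT ▸ isLUB_of_tendsto_atTop hv hv_lim, hT ▸ ?_⟩
  rintro ⟨j, hj⟩
  -- a monotone sequence reaching its limit is eventually constant
  have h_eq : ∀ᶠ j' in atTop, v j' = y i := eventually_atTop.2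
    ⟨j, fun j' hj' => le_antisymm (hv.ge_of_tendsto hv_lim j') (hj ▸ hv hj')⟩
  exact hi (tendsto_pure.1 ((tendsto_add_atTop_iff_nat N).1 (tendsto_pure.2 h_eq)))

theorem exists_lex_strictMono_of_coord_strictMono {β : Type*} [Preorder β] {n : ℕ}
    {T : Set (Fin n → ℝ)} {i : Fin n} {c : Fin n → ℝ} (hc : ∀ x ∈ T, ∀ l < i, x l = c l)
    {k : ℕ} {f : β → ℝ} (hf : StrictMono f) (hfT : ∀ b, f b ∈ k • ((· i) '' T)) :
    ∃ g : β → Fin n → ℝ, StrictMono (toLex ∘ g) ∧ ∀ b, g b ∈ k • T := by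
  have hlift (b : β) : f b ∈ Pi.evalAddMonoidHom (fun _ => ℝ) i '' (k • T) := by
    rw [image_nsmul]
    exact hfT b
  choose g hgT hgi using hlift
  have hpre : ∀ b, ∀ l < i, g b l = k • c l := fun b l hl =>
    map_eq_nsmul_of_mem_nsmul (Pi.evalAddMonoidHom (fun _ => ℝ) l) (fun x hx => hc x hx l hl)
      (hgT b)
  exact ⟨g, fun b b' hbb' => ⟨i, fun l hl => (hpre b l hl).trans (hpre b' l hl).symm,
    (hgi b).trans_lt ((hf hbb').trans_eq (hgi b').symm)⟩, hgT⟩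

theorem no_accumulation_point_of_wellOrdered_subsemigroup_general
    (n h : ℕ) (S : Set (Fin n → ℝ))
    (hadd : ∀ x ∈ S, ∀ y ∈ S, x + y ∈ S)
    (hWF : (toLex '' S : Set (Lex (Fin n → ℝ))).IsWF)
    (hord : setOrdinalType (toLex '' S : Set (Lex (Fin n → ℝ))) hWF ≤
      Ordinal.omega0 ^ (h : Ordinal)) :
    ∀ x : Fin n → ℝ, ¬ AccPt x (𝓟 S) := by
  intro x hx
  obtain ⟨w, hwS, hw, y, hy⟩ := exists_lex_strictMono_tendsto_of_accPt hWF hx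
  obtain ⟨i, T, hTw, hT_pre, hT_lub, hT_max⟩ := exists_coord_isLUB_of_lex_strictMono_tendsto hw hy
  obtain ⟨f, hf, hfT⟩ := exists_strictMono_lex_fin_nat_mem_nsmul hT_lub hT_max (h + 1) one_pos
  obtain ⟨g, hg, hgT⟩ := exists_lex_strictMono_of_coord_strictMono hT_pre hf fun m => (hfT m).1
  have hgS : ∀ m, (toLex ∘ g) m ∈ toLex '' S := fun m => mem_image_of_mem _ <|
    nsmul_subset_of_add_mem hadd (hTw.trans (range_subset_iff.2 hwS)) h.succ_ne_zero (hgT m)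
  have h_le : ω ^ ((h + 1 : ℕ) : Ordinal) ≤ ω ^ (h : Ordinal) :=
    (type_lex_fin_nat (h + 1)).symm.trans_le ((typeLT_le_setOrdinalType hWF hg hgS).trans hord)
  exact h_le.not_gt ((opow_lt_opow_iff_right one_lt_omega0).2 (Nat.cast_lt.2 h.lt_succ_self))

/-- Let `S` be a subsemigroup (under addition) of the nonnegative part of `ℝ^n` with the
lexicographic order, which is well ordered (for the lexicographic order) of ordinal type
`≤ ω ^ h`.  Then `S` has no accumulation point in `ℝ^n` for the Euclidean topology. -/
theorem no_accumulation_point_of_wellOrdered_subsemigroup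
    (n h : ℕ) (S : Set (Fin n → ℝ))
    (hadd : ∀ x ∈ S, ∀ y ∈ S, x + y ∈ S)
    (hnonneg : ∀ x ∈ S, toLex (0 : Fin n → ℝ) ≤ toLex x)
    (hWF : (toLex '' S : Set (Lex (Fin n → ℝ))).IsWF)
    (hord : setOrdinalType (toLex '' S : Set (Lex (Fin n → ℝ))) hWF ≤
      Ordinal.omega0 ^ (h : Ordinal)) :
    ∀ x : Fin n → ℝ, ¬ AccPt x (𝓟 S) :=
  no_accumulation_point_of_wellOrdered_subsemigroup_general n h S hadd hWF hord
end

section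
/- Let n, h ∈ ℕ and let S be a subsemigroup under addition of the nonnegative part of ℝ^n equipped with the lexicographic order. Suppose S is well-ordered (for the lexicographic order) of ordinal type ≤ ω^h. Then the ordinal type of S is ≤ ω^n. -/
/-!
Induct on the dimension, carrying the property that every sumset `(m + 1) • X` has type at
most `ω ^ h`; this passes to each fibre `{v | (p, v) ∈ X}`, since `v ↦ ((m + 1) p, v)` embeds its sumsets
into those of `X`. The first coordinates of `X` are well ordered, and only finitely many lie below
any `r`: otherwise a bounded increasing sequence `t` of them has `(h + 1)`-fold sums realising the
lexicographic order of `ℕ ^ (h + 1)` (pass to a subsequence converging to `sup t` so fast that each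
gap to the limit dominates the sum of all later ones), forcing `ω ^ (h + 1) ≤ ω ^ h`. Hence the
first coordinates have type at most `ω`, the fibres have type at most `ω ^ d` by induction, and
`X` has type at most `ω ^ d * ω`.
-/

open Filter

open Ordinal Set Topology
open scoped Pointwise

section LexTuples

variable {α : Type*} [LinearOrder α] {d : ℕ}

theorem toLex_lt_toLex_of_head_lt {x y : Fin (d + 1) → α} (h : x 0 < y 0) :
    toLex x < toLex y :=
  ⟨0, fun j hj => absurd hj (Fin.not_lt_zero j), h⟩

theorem toLex_cons_lt_toLex_cons_iff {a b : α} {u v : Fin d → α} :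
    toLex (Fin.cons a u : Fin (d + 1) → α) < toLex (Fin.cons b v) ↔
      a < b ∨ a = b ∧ toLex u < toLex v :=
  Fin.pi_lex_lt_cons_cons _

theorem toLex_lt_toLex_iff_head_tail {x y : Fin (d + 1) → α} :
    toLex x < toLex y ↔ x 0 < y 0 ∨ x 0 = y 0 ∧ toLex (Fin.tail x) < toLex (Fin.tail y) := by
  rw [← Fin.cons_self_tail x, ← Fin.cons_self_tail y, toLex_cons_lt_toLex_cons_iff]
  simp only [Fin.cons_zero, Fin.tail_cons]

end LexTuples

theorem exists_strictMono_nat_of_infinite (α : Type*) [LinearOrder α] [WellFoundedLT α]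
    [Infinite α] : ∃ f : ℕ → α, StrictMono f :=
  (Infinite.exists_strictMono_or_strictAnti α).imp fun f hf =>
    hf.resolve_right (not_strictAnti_of_wellFoundedLT f)

theorem strictMonoOn_ncard_inter_Iio {α : Type*} [LinearOrder α] {P : Set α}
    (hfin : ∀ q, (P ∩ Iio q).Finite) : StrictMonoOn (fun p => (P ∩ Iio p).ncard) P :=
  fun p hp q _ hpq => ncard_lt_ncard
    ((ssubset_iff_of_subset (inter_subset_inter_right _ (Iio_subset_Iio hpq.le))).2
      ⟨p, ⟨hp, hpq⟩, fun h => lt_irrefl p h.2⟩) (hfin q)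

theorem typeLT_le_iff_exists_strictMono {β : Type*} [LinearOrder β] [WellFoundedLT β]
    {o : Ordinal} : typeLT β ≤ o ↔ ∃ f : β → o.ToType, StrictMono f := by
  calc typeLT β ≤ o ↔ typeLT β ≤ typeLT o.ToType := by rw [type_toType]
    _ ↔ _ := type_le_iff'.trans
      ⟨fun ⟨f⟩ => ⟨f, fun _ _ h => f.map_rel_iff.2 h⟩, fun ⟨f, hf⟩ => ⟨.ofMonotone f hf⟩⟩

theorem exists_strictMono_lex_nat_prod (o : Ordinal.{0}) :
    ∃ e : ℕ ×ₗ o.ToType → (o * ω).ToType, StrictMono e :=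
  typeLT_le_iff_exists_strictMono.1 <| le_of_eq <| by
    change (typeLT o.ToType) * typeLT ℕ = o * ω
    rw [type_toType, type_nat_lt]

theorem omega0_pow_le_type_lex_nat (m : ℕ) : ω ^ (m : Ordinal) ≤ typeLT (Lex (Fin m → ℕ)) := by
  induction m with
  | zero =>
    rw [Nat.cast_zero, opow_zero, Order.one_le_iff_ne_zero]
    exact @type_ne_zero_of_nonempty _ _ _ ⟨toLex 0⟩
  | succ m ih =>
    have hcons : StrictMono fun p : ℕ ×ₗ Lex (Fin m → ℕ) =>
        toLex (Fin.cons (ofLex p).1 (ofLex (ofLex p).2) : Fin (m + 1) → ℕ) := fun p q hpq =>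
      toLex_cons_lt_toLex_cons_iff.2 (Prod.Lex.lt_iff.1 hpq)
    calc ω ^ ((m + 1 : ℕ) : Ordinal) = ω ^ (m : Ordinal) * ω := by
          rw [Nat.cast_succ, opow_add_one]
      _ ≤ (typeLT (Lex (Fin m → ℕ))) * typeLT ℕ := by
          rw [type_nat_lt]
          exact mul_le_mul_left ih _
      _ = typeLT (ℕ ×ₗ Lex (Fin m → ℕ)) := rfl
      _ ≤ _ := type_le_iff'.2 ⟨.ofMonotone _ hcons⟩

theorem omega0_pow_le_of_strictMono {m : ℕ} {o : Ordinal.{0}} {g : Lex (Fin m → ℕ) → o.ToType}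
    (hg : StrictMono g) : ω ^ (m : Ordinal) ≤ o :=
  (omega0_pow_le_type_lex_nat m).trans (typeLT_le_iff_exists_strictMono.2 ⟨g, hg⟩)

open Finset in
theorem sum_lt_sum_of_toLex_lt {m : ℕ} {ε : ℕ → ℝ} (hpos : ∀ j, 0 < ε j)
    (hdecay : ∀ j j', j < j' → m * ε j' < ε j) {r s : Fin m → ℕ} (hs : Monotone s)
    (hrs : toLex r < toLex s) : ∑ i, ε (s i) < ∑ i, ε (r i) := by
  obtain ⟨i₀, heq, hlt⟩ := hrs
  set U := univ.filter fun i => ¬i < i₀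
  have hi₀ : i₀ ∈ U := by simp [U]
  have hU : ∑ i ∈ U, ε (s i) < ε (r i₀) := by
    have hcard : (#U : ℝ) ≤ m := by exact_mod_cast (card_filter_le _ _).trans (card_fin m).le
    refine lt_of_mul_lt_mul_left ?_ (Nat.cast_nonneg m)
    calc (m : ℝ) * ∑ i ∈ U, ε (s i) = ∑ i ∈ U, m * ε (s i) := mul_sum _ _ _
      _ < ∑ _i ∈ U, ε (r i₀) := sum_lt_sum_of_nonempty ⟨i₀, hi₀⟩ fun i hi =>
          hdecay _ _ (hlt.trans_le (hs (not_lt.1 (mem_filter.1 hi).2)))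
      _ = #U * ε (r i₀) := by rw [sum_const]; exact nsmul_eq_mul _ _
      _ ≤ m * ε (r i₀) := mul_le_mul_of_nonneg_right hcard (hpos _).le
  have hlow : ∑ i ∈ univ.filter (· < i₀), ε (s i) = ∑ i ∈ univ.filter (· < i₀), ε (r i) :=
    sum_congr rfl fun i hi => by rw [show r i = s i from heq i (mem_filter.1 hi).2]
  rw [← sum_filter_add_sum_filter_not univ (· < i₀), ← sum_filter_add_sum_filter_not univ (· < i₀),
    hlow]
  exact add_lt_add_right (hU.trans_le (single_le_sum (fun i _ => (hpos _).le) hi₀)) _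

theorem exists_rapidly_decreasing_subseq {ε : ℕ → ℝ} (hpos : ∀ k, 0 < ε k)
    (hlim : Tendsto ε atTop (𝓝 0)) (c : ℝ) :
    ∃ u : ℕ → ℕ, ∀ j j', j < j' → c * ε (u j') < ε (u j) := by
  set c' := max c 1
  have hnext : ∀ k, ∃ k', c' * ε k' < ε k := fun k =>
    ((hlim.const_mul c').eventually (gt_mem_nhds (by simpa using hpos k))).exists
  choose g hg using hnext
  set u : ℕ → ℕ := fun j => g^[j] 0
  have hstep : ∀ j, c' * ε (u (j + 1)) < ε (u j) := fun j => by
    simp only [u, Function.iterate_succ_apply']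
    exact hg _
  have hanti : StrictAnti (ε ∘ u) := strictAnti_nat_of_succ_lt fun j =>
    (le_mul_of_one_le_left (hpos _).le (le_max_right _ _)).trans_lt (hstep j)
  refine ⟨u, fun j j' hjj' => ?_⟩
  obtain ⟨k, rfl⟩ := Nat.exists_eq_add_of_lt hjj'
  calc c * ε (u (j + k + 1)) ≤ c' * ε (u (j + k + 1)) :=
        mul_le_mul_of_nonneg_right (le_max_left _ _) (hpos _).le
    _ < ε (u (j + k)) := hstep _
    _ ≤ ε (u j) := hanti.antitone (Nat.le_add_right j k)

theorem strictMono_toLex_partialSums (m : ℕ) :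
    StrictMono fun a : Lex (Fin m → ℕ) => toLex fun i => ∑ j ∈ Finset.Iic i, ofLex a j := by
  rintro a b ⟨i₀, heq, hlt⟩
  refine ⟨i₀, fun i hi => Finset.sum_congr rfl fun j hj =>
    heq j ((Finset.mem_Iic.1 hj).trans_lt hi), Finset.sum_lt_sum (fun j hj => ?_)
      ⟨i₀, Finset.mem_Iic.2 le_rfl, hlt⟩⟩
  rcases (Finset.mem_Iic.1 hj).lt_or_eq with hj | rfl
  · exact (heq j hj).le
  · exact hlt.le

theorem monotone_partialSums {m : ℕ} (a : Fin m → ℕ) :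
    Monotone fun i => ∑ j ∈ Finset.Iic i, a j :=
  fun _ _ h => Finset.sum_le_sum_of_subset (Finset.Iic_subset_Iic.2 h)

theorem exists_strictMono_sum_of_bddAbove {t : ℕ → ℝ} (ht : StrictMono t)
    (hbdd : BddAbove (range t)) (m : ℕ) :
    ∃ ν : Lex (Fin m → ℕ) → Fin m → ℕ, StrictMono fun a => ∑ i, t (ν a i) := by
  set L := ⨆ k, t k
  have hpos : ∀ k, 0 < L - t k := fun k =>
    sub_pos.2 ((ht k.lt_succ_self).trans_le (le_ciSup hbdd _))
  have hlim : Tendsto (fun k => L - t k) atTop (𝓝 0) := by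
    simpa [L] using (tendsto_atTop_ciSup ht.monotone hbdd).const_sub L
  obtain ⟨u, hu⟩ := exists_rapidly_decreasing_subseq hpos hlim m
  refine ⟨fun a i => u (∑ j ∈ Finset.Iic i, ofLex a j), fun a b hab => ?_⟩
  have := sum_lt_sum_of_toLex_lt (fun _ => hpos _) hu (monotone_partialSums (ofLex b))
    (strictMono_toLex_partialSums m hab)
  simp only [Finset.sum_sub_distrib] at this
  linarith

theorem succ_nsmul_subset_self {M : Type*} [AddMonoid M] {S : Set M}
    (hadd : ∀ x ∈ S, ∀ y ∈ S, x + y ∈ S) (m : ℕ) : (m + 1) • S ⊆ S := by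
  induction m with
  | zero => rw [zero_add, one_nsmul]
  | succ m ih =>
    rw [succ_nsmul]
    exact add_subset_iff.2 fun x hx y hy => hadd x (ih hx) y hy

theorem cons_nsmul_mem_nsmul {M : Type*} [AddMonoid M] {d : ℕ} {X : Set (Fin (d + 1) → M)}
    {p : M} : ∀ {k : ℕ} {v : Fin d → M}, v ∈ k • {v | Fin.cons p v ∈ X} →
      (Fin.cons (k • p) v : Fin (d + 1) → M) ∈ k • X
  | 0, v, hv => by
    rw [zero_nsmul, Set.mem_zero] at hv ⊢
    rw [hv, zero_nsmul]
    exact Matrix.cons_zero_zero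
  | k + 1, _, hv => by
    rw [succ_nsmul] at hv
    obtain ⟨a, ha, b, hb, rfl⟩ := hv
    have hcons : (Fin.cons ((k + 1) • p) (a + b) : Fin (d + 1) → M) =
        Fin.cons (k • p) a + Fin.cons p b := by
      rw [succ_nsmul]
      exact (Matrix.cons_add_cons _ _ _ _).symm
    rw [hcons, succ_nsmul X]
    exact add_mem_add (cons_nsmul_mem_nsmul ha) hb

/-- `setOrdinalType (toLex '' X) _ ≤ o`, phrased by an embedding so that no proof of
well-foundedness has to be carried along. -/
def LexTypeLE {d : ℕ} (X : Set (Fin d → ℝ)) (o : Ordinal.{0}) : Prop :=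
  ∃ f : X → o.ToType, ∀ x y : X, toLex (x : Fin d → ℝ) < toLex (y : Fin d → ℝ) → f x < f y

namespace LexTypeLE

variable {d : ℕ} {o : Ordinal.{0}}

theorem iff_setOrdinalType_le {X : Set (Fin d → ℝ)} (hX : (toLex '' X).IsWF) :
    LexTypeLE X o ↔ setOrdinalType (toLex '' X) hX ≤ o := by
  have : WellFoundedLT (toLex '' X) := ⟨hX⟩
  refine Iff.trans ?_ typeLT_le_iff_exists_strictMono.symm
  constructor
  · rintro ⟨f, hf⟩
    refine ⟨fun w => f ⟨ofLex w.1, ?_⟩, fun _ _ h => hf _ _ h⟩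
    obtain ⟨x, hx, hw⟩ := w.2
    rwa [← hw]
  · rintro ⟨g, hg⟩
    exact ⟨fun x => g ⟨toLex x.1, mem_image_of_mem _ x.2⟩, fun _ _ h => hg h⟩

theorem of_mapsTo {X : Set (Fin d → ℝ)} {d' : ℕ} {X' : Set (Fin d' → ℝ)}
    {g : (Fin d → ℝ) → Fin d' → ℝ} (hX' : LexTypeLE X' o) (hg : MapsTo g X X')
    (hmono : ∀ x y, toLex x < toLex y → toLex (g x) < toLex (g y)) : LexTypeLE X o :=
  let ⟨F, hF⟩ := hX'
  ⟨fun x => F ⟨g x, hg x.2⟩, fun _ _ h => hF _ _ (hmono _ _ h)⟩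

theorem of_dim_zero (X : Set (Fin 0 → ℝ)) : LexTypeLE X 1 :=
  ⟨fun _ => default, fun _ _ ⟨i, _⟩ => i.elim0⟩

theorem isWF_image_head {X : Set (Fin (d + 1) → ℝ)} (hX : LexTypeLE X o) :
    ((· 0) '' X).IsWF := by
  rw [isWF_iff_no_descending_seq]
  intro f hf hmem
  choose x hxX hx0 using hmem
  obtain ⟨F, hF⟩ := hX
  refine not_strictAnti_of_wellFoundedLT (fun k => F ⟨x k, hxX k⟩) fun k l hkl =>
    hF _ _ (toLex_lt_toLex_of_head_lt ?_)
  simpa only [hx0] using hf hkl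

theorem omega0_pow_le_of_strictMono_heads {m : ℕ} {X : Set (Fin (d + 1) → ℝ)}
    (hX : LexTypeLE (m • X) o) {t : ℕ → ℝ} (ht : StrictMono t) (hbdd : BddAbove (range t))
    (hmem : ∀ k, t k ∈ (· 0) '' X) : ω ^ (m : Ordinal) ≤ o := by
  choose x hxX hx0 using hmem
  obtain ⟨ν, hν⟩ := exists_strictMono_sum_of_bddAbove ht hbdd m
  have hsum : ∀ a, ∑ i, x (ν a i) ∈ m • X := fun a =>
    mem_nsmul.2 ⟨fun i => ⟨_, hxX (ν a i)⟩, List.sum_ofFn⟩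
  obtain ⟨F, hF⟩ := hX
  refine omega0_pow_le_of_strictMono (g := fun a => F ⟨_, hsum a⟩) fun a b hab =>
    hF _ _ (toLex_lt_toLex_of_head_lt ?_)
  simpa only [Finset.sum_apply, hx0] using hν hab

theorem finite_image_head_inter_Iio {X : Set (Fin (d + 1) → ℝ)} {h : ℕ}
    (hX : ∀ m : ℕ, LexTypeLE ((m + 1) • X) (ω ^ (h : Ordinal))) (r : ℝ) :
    ((· 0) '' X ∩ Iio r).Finite := by
  by_contra hinf
  have : WellFoundedLT ↥((· 0) '' X ∩ Iio r) :=
    ⟨((by simpa using hX 0 : LexTypeLE X _).isWF_image_head).mono inter_subset_left⟩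
  have : Infinite ↥((· 0) '' X ∩ Iio r) := Set.infinite_coe_iff.2 hinf
  obtain ⟨s, hs⟩ := exists_strictMono_nat_of_infinite ↥((· 0) '' X ∩ Iio r)
  have hle := (hX h).omega0_pow_le_of_strictMono_heads ((Subtype.strictMono_coe _).comp hs)
    ⟨r, forall_mem_range.2 fun k => (s k).2.2.le⟩ fun k => (s k).2.1
  refine hle.not_gt ((opow_lt_opow_iff_right one_lt_omega0).2 ?_)
  exact_mod_cast h.lt_succ_self

theorem mul_omega0_of_fibers {X : Set (Fin (d + 1) → ℝ)} (hfin : ∀ r, ((· 0) '' X ∩ Iio r).Finite)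
    (hfib : ∀ p, LexTypeLE {v | Fin.cons p v ∈ X} o) : LexTypeLE X (o * ω) := by
  choose F hF using hfib
  obtain ⟨e, he⟩ := exists_strictMono_lex_nat_prod o
  have htail : ∀ x ∈ X, Fin.tail x ∈ {v | Fin.cons (x 0) v ∈ X} := fun x hx => by
    rwa [← Fin.cons_self_tail x] at hx
  have hfiber : ∀ {p q} (hpq : p = q) (u : ↥{v | Fin.cons p v ∈ X})
      (v : ↥{v | Fin.cons q v ∈ X}), toLex u.1 < toLex v.1 → F p u < F q v := by
    rintro p _ rfl u v
    exact hF p u v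
  refine ⟨fun x => e (toLex (((· 0) '' X ∩ Iio (x.1 0)).ncard, F (x.1 0) ⟨_, htail x.1 x.2⟩)),
    fun x y hxy => he (Prod.Lex.toLex_lt_toLex.2 ?_)⟩
  rcases toLex_lt_toLex_iff_head_tail.1 hxy with hlt | ⟨heq, hlt⟩
  · exact Or.inl (strictMonoOn_ncard_inter_Iio hfin ⟨x, x.2, rfl⟩ ⟨y, y.2, rfl⟩ hlt)
  · exact Or.inr ⟨congrArg (fun p => ((· 0) '' X ∩ Iio p).ncard) heq, hfiber heq _ _ hlt⟩

end LexTypeLE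

theorem lexTypeLE_omega0_pow_dim_of_nsmul {h : ℕ} : ∀ {d : ℕ} {X : Set (Fin d → ℝ)},
    (∀ m : ℕ, LexTypeLE ((m + 1) • X) (ω ^ (h : Ordinal))) → LexTypeLE X (ω ^ (d : Ordinal))
  | 0, X, _ => by simpa using LexTypeLE.of_dim_zero X
  | d + 1, X, hX => by
    have hfib : ∀ p : ℝ, LexTypeLE {v | Fin.cons p v ∈ X} (ω ^ (d : Ordinal)) := fun p =>
      lexTypeLE_omega0_pow_dim_of_nsmul fun m => (hX m).of_mapsTo
        (fun _ hv => cons_nsmul_mem_nsmul hv)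
        fun _ _ huv => toLex_cons_lt_toLex_cons_iff.2 (Or.inr ⟨rfl, huv⟩)
    rw [Nat.cast_succ, opow_add_one]
    exact LexTypeLE.mul_omega0_of_fibers (LexTypeLE.finite_image_head_inter_Iio hX) hfib

theorem ordinalType_le_omega_pow_dim_of_wellOrdered_subsemigroup_general
    (n h : ℕ) (S : Set (Fin n → ℝ))
    (hadd : ∀ x ∈ S, ∀ y ∈ S, x + y ∈ S)
    (hWF : (toLex '' S : Set (Lex (Fin n → ℝ))).IsWF)
    (hord : setOrdinalType (toLex '' S : Set (Lex (Fin n → ℝ))) hWF ≤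
      Ordinal.omega0 ^ (h : Ordinal)) :
    setOrdinalType (toLex '' S : Set (Lex (Fin n → ℝ))) hWF ≤
      Ordinal.omega0 ^ (n : Ordinal) := by
  have hS := (LexTypeLE.iff_setOrdinalType_le hWF).2 hord
  have hsumsets : ∀ m : ℕ, LexTypeLE ((m + 1) • S) (ω ^ (h : Ordinal)) := fun m =>
    hS.of_mapsTo (succ_nsmul_subset_self hadd m) fun _ _ hxy => hxy
  exact (LexTypeLE.iff_setOrdinalType_le hWF).1 (lexTypeLE_omega0_pow_dim_of_nsmul hsumsets)

/-- Let `S` be a subsemigroup (under addition) of the nonnegative part of `ℝ^n` with the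
lexicographic order, which is well ordered (for the lexicographic order) of ordinal type
`≤ ω ^ h`.  Then the ordinal type of `S` is at most `ω ^ n`. -/
theorem ordinalType_le_omega_pow_dim_of_wellOrdered_subsemigroup
    (n h : ℕ) (S : Set (Fin n → ℝ))
    (hadd : ∀ x ∈ S, ∀ y ∈ S, x + y ∈ S)
    (hnonneg : ∀ x ∈ S, toLex (0 : Fin n → ℝ) ≤ toLex x)
    (hWF : (toLex '' S : Set (Lex (Fin n → ℝ))).IsWF)
    (hord : setOrdinalType (toLex '' S : Set (Lex (Fin n → ℝ))) hWF ≤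
      Ordinal.omega0 ^ (h : Ordinal)) :
    setOrdinalType (toLex '' S : Set (Lex (Fin n → ℝ))) hWF ≤
      Ordinal.omega0 ^ (n : Ordinal) :=
  ordinalType_le_omega_pow_dim_of_wellOrdered_subsemigroup_general n h S hadd hWF hord
end

section
/- Let p and q be prime numbers, and let S_{p,q} be the subsemigroup of (ℚ, +) generated by the rational numbers 1 − 1/p^i for all integers i ≥ 1 together with 2 − 1/q^j for all integers j ≥ 1. Then S_{p,q} is a well-ordered subset of ℚ and, for every h ∈ ℕ, the ordinal type of S_{p,q} is strictly greater than ω^h; in particular the ordinal type of S_{p,q} is at least ω^ω. -/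
open Set Ordinal

universe u

@[reducible] def LexPow : ℕ → Type
  | 0 => ℕ
  | h + 1 => ℕ ×ₗ LexPow h

instance LexPow.instLinearOrder : (h : ℕ) → LinearOrder (LexPow h)
  | 0 => inferInstanceAs (LinearOrder ℕ)
  | h + 1 =>
    letI := LexPow.instLinearOrder h
    inferInstanceAs (LinearOrder (ℕ ×ₗ LexPow h))

instance LexPow.instWellFoundedLT : ∀ h, WellFoundedLT (LexPow h)
  | 0 => inferInstanceAs (WellFoundedLT ℕ)
  | h + 1 =>
    letI := instWellFoundedLT h
    inferInstanceAs (WellFoundedLT (ℕ ×ₗ LexPow h))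

theorem LexPow.typeLT_eq : ∀ h, typeLT (LexPow h) = ω ^ (h + 1 : Ordinal)
  | 0 => by simp
  | h + 1 => by
      show type (Prod.Lex ((· < ·) : ℕ → ℕ → Prop) ((· < ·) : LexPow h → LexPow h → Prop)) = _
      rw [type_prod_lex, typeLT_eq h, type_nat_lt, ← opow_succ]
      push_cast
      rfl

theorem typeLT_le_setOrdinalType_of_strictMono {α β : Type u} [LinearOrder α] [WellFoundedLT α]
    [LinearOrder β] {S : Set β} (hS : S.IsWF) {f : α → β} (hf : StrictMono f)
    (hfS : ∀ a, f a ∈ S) : typeLT α ≤ setOrdinalType S hS :=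
  let _ : WellFoundedLT S := ⟨hS⟩
  (OrderEmbedding.ofStrictMono (fun a => (⟨f a, hfS a⟩ : S)) hf).ltEmbedding.ordinal_type_le

theorem Set.IsPWO.addSubsemigroup_closure {M : Type*} [AddCommMonoid M] [PartialOrder M]
    [IsOrderedCancelAddMonoid M] {s : Set M} (hs : s.IsPWO) (hpos : ∀ x ∈ s, 0 ≤ x) :
    (AddSubsemigroup.closure s : Set M).IsPWO :=
  (hs.addSubmonoid_closure hpos).mono <|
    AddSubsemigroup.closure_le (S := (AddSubmonoid.closure s).toAddSubsemigroup).2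
      AddSubmonoid.subset_closure

theorem strictMono_lex_of_lt_succ {α β : Type*} [Preorder α] [Preorder β]
    {g : ℕ → α → β} (hg : ∀ n, StrictMono (g n)) (hlt : ∀ n a b, g n a < g (n + 1) b) :
    StrictMono fun x : ℕ ×ₗ α => g (ofLex x).1 (ofLex x).2 := by
  have hblock : ∀ m n, m < n → ∀ a b, g m a < g n b := by
    intro m n hmn a
    induction n, hmn using Nat.le_induction with
    | base => exact hlt m a
    | succ n _ ih => exact fun b => (ih a).trans (hlt n a b)
  intro x y hxy
  rcases Prod.Lex.lt_iff.1 hxy with hlt | ⟨heq, hlt⟩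
  · exact hblock _ _ hlt _ _
  · dsimp only
    rw [heq]
    exact hg _ hlt

variable {K : Type*} [Field K] [LinearOrder K] [IsStrictOrderedRing K]

theorem antitone_one_div_natCast_pow (q : ℕ) : Antitone fun j : ℕ => 1 / (q : K) ^ j := by
  rcases q.eq_zero_or_pos with rfl | hq
  · intro a b hab
    rcases b.eq_zero_or_pos with rfl | hb
    · rw [Nat.le_zero.1 hab]
    · simp [zero_pow hb.ne']
  · exact fun a b hab => one_div_pow_le_one_div_pow_of_le (by exact_mod_cast hq) hab

theorem one_div_natCast_pow_le_one (q j : ℕ) : 1 / (q : K) ^ j ≤ 1 := by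
  simpa using antitone_one_div_natCast_pow (K := K) q (Nat.zero_le j)

theorem isPWO_setOf_sub_one_div_natCast_pow (c : K) (q : ℕ) :
    {x : K | ∃ i : ℕ, 1 ≤ i ∧ x = c - 1 / (q : K) ^ i}.IsPWO := by
  refine ((IsPWO.of_linearOrder univ).image_of_monotone fun a b hab =>
    sub_le_sub_left (antitone_one_div_natCast_pow q hab) c).mono ?_
  rintro _ ⟨i, -, rfl⟩
  exact ⟨i, trivial, rfl⟩

theorem two_div_pow_succ_le {p : K} (hp : 2 ≤ p) (k : ℕ) : 2 / p ^ (k + 1) ≤ 1 / p ^ k := by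
  have hpk : 0 < p ^ k := by positivity
  rw [pow_succ, div_le_div_iff₀ (by positivity) hpk]
  nlinarith

theorem exists_strictMono_lexPow {p : K} (hp : 2 ≤ p) (S : AddSubsemigroup K)
    (hS : ∀ i, 1 - 1 / p ^ (i + 1) ∈ S) (h : ℕ) :
    ∀ s : ℕ, ∃ f : LexPow h → K, StrictMono f ∧ (∀ a, f a ∈ S) ∧
      ∀ a, f a ∈ Ioo ((h : K) + 1 - 1 / p ^ s) (h + 1) := by
  have hp1 : 1 < p := by linarith
  induction h with
  | zero =>
    intro s
    have hmono : StrictMono fun n : ℕ => 1 - 1 / p ^ (s + n + 1) := fun m n hmn =>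
      sub_lt_sub_left (one_div_pow_lt_one_div_pow_of_lt hp1 (by omega)) 1
    refine ⟨_, hmono, fun n => hS _, fun n => ?_⟩
    have hpos : (0 : K) < 1 / p ^ (s + n + 1) := by positivity
    have hlt := one_div_pow_lt_one_div_pow_of_lt hp1 (show s < s + n + 1 by omega)
    constructor <;> push_cast <;> linarith
  | succ h ih =>
    choose g hg hgS hgI using ih
    intro s
    have hblock (t : ℕ) (w : LexPow h) : 1 - 1 / p ^ t + g t w ∈
        Ioo (((h + 1 : ℕ) : K) + 1 - 2 / p ^ t) (((h + 1 : ℕ) : K) + 1 - 1 / p ^ t) := by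
      obtain ⟨hlo, hhi⟩ := hgI t w
      constructor <;> push_cast <;> linarith [div_eq_mul_one_div (2 : K) (p ^ t)]
    refine ⟨fun x => 1 - 1 / p ^ (s + (ofLex x).1 + 1) + g (s + (ofLex x).1 + 1) (ofLex x).2,
      strictMono_lex_of_lt_succ (g := fun n w => 1 - 1 / p ^ (s + n + 1) + g (s + n + 1) w)
        (fun n a b hab => add_lt_add_right (hg _ hab) _) fun n a b => ?_,
      fun x => S.add_mem (hS _) (hgS _ _), fun x => ?_⟩
    · show 1 - 1 / p ^ (s + n + 1) + g (s + n + 1) a <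
        1 - 1 / p ^ (s + n + 1 + 1) + g (s + n + 1 + 1) b
      linarith [(hblock (s + n + 1) a).2, (hblock (s + n + 1 + 1) b).1,
        two_div_pow_succ_le hp (s + n + 1)]
    · obtain ⟨hlo, hhi⟩ := hblock (s + (ofLex x).1 + 1) (ofLex x).2
      have hshift : 2 / p ^ (s + (ofLex x).1 + 1) ≤ 2 / p ^ (s + 1) := by
        gcongr
        · linarith
        · omega
      have hpos : (0 : K) < 1 / p ^ (s + (ofLex x).1 + 1) := by positivity
      constructor <;> linarith [two_div_pow_succ_le hp s]

theorem ordinalType_of_Spq_gt_omega_pow_general (p q : ℕ) (hp : p.Prime)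
    (S : AddSubsemigroup ℚ)
    (hS : S = AddSubsemigroup.closure
      ({x : ℚ | ∃ i : ℕ, 1 ≤ i ∧ x = 1 - 1 / (p : ℚ) ^ i} ∪
       {x : ℚ | ∃ j : ℕ, 1 ≤ j ∧ x = 2 - 1 / (q : ℚ) ^ j})) :
    ∃ hWF : (S : Set ℚ).IsWF,
      (∀ h : ℕ, Ordinal.omega0 ^ (h : Ordinal) < setOrdinalType (S : Set ℚ) hWF) ∧
        Ordinal.omega0 ^ Ordinal.omega0 ≤ setOrdinalType (S : Set ℚ) hWF := by
  have hWF : (S : Set ℚ).IsWF := by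
    rw [hS]
    refine ((isPWO_setOf_sub_one_div_natCast_pow 1 p).union
      (isPWO_setOf_sub_one_div_natCast_pow 2 q)).addSubsemigroup_closure ?_ |>.isWF
    rintro _ (⟨i, -, rfl⟩ | ⟨j, -, rfl⟩)
    · linarith [one_div_natCast_pow_le_one (K := ℚ) p i]
    · linarith [one_div_natCast_pow_le_one (K := ℚ) q j]
  have key (h : ℕ) : ω ^ (h + 1 : Ordinal) ≤ setOrdinalType (S : Set ℚ) hWF := by
    have hgen (i : ℕ) : 1 - 1 / (p : ℚ) ^ (i + 1) ∈ S :=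
      hS ▸ AddSubsemigroup.subset_closure (Or.inl ⟨i + 1, by omega, rfl⟩)
    obtain ⟨f, hf, hfS, -⟩ := exists_strictMono_lexPow (by exact_mod_cast hp.two_le) S hgen h 0
    exact LexPow.typeLT_eq h ▸ typeLT_le_setOrdinalType_of_strictMono hWF hf hfS
  refine ⟨hWF, fun h =>
    ((opow_lt_opow_iff_right one_lt_omega0).2 (lt_add_one _)).trans_le (key h), ?_⟩
  rw [opow_le_of_isSuccLimit omega0_ne_zero isSuccLimit_omega0]
  intro b hb
  obtain ⟨n, rfl⟩ := lt_omega0.1 hb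
  exact (opow_le_opow_right omega0_pos le_self_add).trans (key n)

/-- Let `p`, `q` be prime numbers and let `S_{p,q}` be the subsemigroup of `(ℚ, +)` generated
by the rationals `1 - 1/p^i` (`i ≥ 1`) together with `2 - 1/q^j` (`j ≥ 1`).  Then `S_{p,q}` is
a well-ordered subset of `ℚ` whose ordinal type is strictly greater than `ω ^ h` for every
`h ∈ ℕ`; in particular its ordinal type is at least `ω ^ ω`. -/
theorem ordinalType_of_Spq_gt_omega_pow (p q : ℕ) (hp : p.Prime) (hq : q.Prime)
    (S : AddSubsemigroup ℚ)
    (hS : S = AddSubsemigroup.closure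
      ({x : ℚ | ∃ i : ℕ, 1 ≤ i ∧ x = 1 - 1 / (p : ℚ) ^ i} ∪
       {x : ℚ | ∃ j : ℕ, 1 ≤ j ∧ x = 2 - 1 / (q : ℚ) ^ j})) :
    ∃ hWF : (S : Set ℚ).IsWF,
      (∀ h : ℕ, Ordinal.omega0 ^ (h : Ordinal) < setOrdinalType (S : Set ℚ) hWF) ∧
        Ordinal.omega0 ^ Ordinal.omega0 ≤ setOrdinalType (S : Set ℚ) hWF :=
  ordinalType_of_Spq_gt_omega_pow_general p q hp S hS
end

section
/- Let p and q be distinct prime numbers, and for integers i ≥ 1 set γ_i = 1 − 1/p^i and δ_i = 2 − 1/q^i. Then the elements {γ_i : i ≥ 1} ∪ {δ_j : j ≥ 1} form a minimal system of generators of the subsemigroup S_{p,q} of (ℚ, +) which they generate: no γ_i lies in the subsemigroup generated by {γ_k : k ≠ i} ∪ {δ_j : j ≥ 1}, and no δ_j lies in the subsemigroup generated by {γ_i : i ≥ 1} ∪ {δ_k : k ≠ j}. -/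
/-!
Every generator is at least `1/2`, and every `δ_k` is at least `3/2`. Since `γ_i < 1`, any
representation of `γ_i` as a sum of generators consists of a single generator, which would have
to be `γ_i` itself. Since `δ_j < 2`, a representation of `δ_j` is either a single `δ_k` or uses
only `γ`'s. The latter is impossible: the `γ_k` are `q`-adically integral, hence so are their
sums, while `δ_j` has `q`-adic norm `q ^ j`.
-/

namespace AddSubsemigroup

variable {M : Type*} [AddCommMonoid M] [Preorder M] [IsOrderedAddMonoid M]

theorem mem_closure_or_mem_or_add_le_of_mem_closure_union {A B : Set M} {a b x : M}
    (ha : 0 ≤ a) (hab : a ≤ b) (hA : ∀ y ∈ A, a ≤ y) (hB : ∀ y ∈ B, b ≤ y)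
    (hx : x ∈ closure (A ∪ B)) : x ∈ closure A ∨ x ∈ B ∨ a + b ≤ x := by
  have hb_le : ∀ {y}, y ∈ B ∨ a + b ≤ y → b ≤ y := fun
    | .inl hy => hB _ hy
    | .inr hy => (le_add_of_nonneg_left ha).trans hy
  suffices a ≤ x ∧ (x ∈ closure A ∨ x ∈ B ∨ a + b ≤ x) from this.2
  induction hx using closure_induction with
  | mem y hy =>
    rcases hy with hy | hy
    · exact ⟨hA y hy, .inl (subset_closure hy)⟩
    · exact ⟨hab.trans (hB y hy), .inr (.inl hy)⟩
  | add y z _ _ hy hz =>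
    refine ⟨le_add_of_le_of_nonneg hy.1 (ha.trans hz.1), ?_⟩
    rcases hy with ⟨hay, hyA | hyB⟩
    · rcases hz with ⟨-, hzA | hzB⟩
      · exact .inl (add_mem hyA hzA)
      · exact .inr (.inr (add_le_add hay (hb_le hzB)))
    · exact .inr (.inr (add_comm a b ▸ add_le_add (hb_le hyB) hz.1))

theorem mem_or_add_le_of_mem_closure {s : Set M} {a x : M} (ha : 0 ≤ a)
    (hs : ∀ y ∈ s, a ≤ y) (hx : x ∈ closure s) : x ∈ s ∨ a + a ≤ x := by
  rw [← Set.empty_union s] at hx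
  simpa [closure_empty, notMem_bot] using
    mem_closure_or_mem_or_add_le_of_mem_closure_union ha le_rfl (by simp) hs hx

end AddSubsemigroup

section padicNorm

variable {ℓ : ℕ} [hℓ : Fact ℓ.Prime]

theorem padicNorm_le_one_of_mem_closure {s : Set ℚ} (hs : ∀ y ∈ s, padicNorm ℓ y ≤ 1) {x : ℚ}
    (hx : x ∈ AddSubsemigroup.closure s) : padicNorm ℓ x ≤ 1 := by
  induction hx using AddSubsemigroup.closure_induction with
  | mem y hy => exact hs y hy
  | add y z _ _ hy hz => exact padicNorm.nonarchimedean.trans (max_le hy hz)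

theorem padicNorm_one_sub_one_div_pow_le_one {p : ℕ} (hℓp : ¬ℓ ∣ p) (i : ℕ) :
    padicNorm ℓ (1 - 1 / (p : ℚ) ^ i) ≤ 1 := by
  have hp : padicNorm ℓ p = 1 := (padicNorm.nat_eq_one_iff p).2 hℓp
  refine padicNorm.sub.trans (max_le padicNorm.one.le ?_)
  rw [padicNorm.div, padicNorm.one, IsAbsoluteValue.abv_pow (padicNorm ℓ), hp, one_pow, div_one]

theorem one_lt_padicNorm_two_sub_one_div_pow {j : ℕ} (hj : j ≠ 0) :
    1 < padicNorm ℓ (2 - 1 / (ℓ : ℚ) ^ j) := by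
  have hinv : padicNorm ℓ (1 / (ℓ : ℚ) ^ j) = (ℓ : ℚ) ^ j := by
    rw [padicNorm.div, padicNorm.one, IsAbsoluteValue.abv_pow (padicNorm ℓ),
      padicNorm.padicNorm_p_of_prime, inv_pow, one_div, inv_inv]
  by_contra! h
  have hle : padicNorm ℓ (2 - (2 - 1 / (ℓ : ℚ) ^ j)) ≤ 1 :=
    padicNorm.sub.trans (max_le (mod_cast padicNorm.of_int 2) h)
  rw [sub_sub_cancel, hinv] at hle
  exact hle.not_gt (one_lt_pow₀ (mod_cast hℓ.out.one_lt) hj)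

end padicNorm

section OrderedField

variable {K : Type*} [Field K] [LinearOrder K] [IsStrictOrderedRing K]

theorem sub_one_div_pow_inj {x : K} (hx : 1 < x) (c : K) {m n : ℕ} :
    c - 1 / x ^ m = c - 1 / x ^ n ↔ m = n := by
  simp [pow_right_inj₀ (zero_lt_one.trans hx) hx.ne']

theorem half_le_one_sub_one_div_pow {x : K} (hx : 2 ≤ x) {k : ℕ} (hk : k ≠ 0) :
    1 / 2 ≤ 1 - 1 / x ^ k := by
  have : 1 / x ^ k ≤ 1 / 2 :=
    one_div_le_one_div_of_le two_pos (hx.trans (le_self_pow₀ (one_le_two.trans hx) hk))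
  linarith

end OrderedField

/-- Let `p ≠ q` be prime numbers and, for `i ≥ 1`, set `γ_i = 1 - 1/p^i` and `δ_i = 2 - 1/q^i`.
These elements form a minimal system of generators of the subsemigroup of `(ℚ, +)` which they
generate: no `γ_i` lies in the subsemigroup generated by the other generators, and no `δ_j`
lies in the subsemigroup generated by the other generators. -/
theorem minimal_generators_of_Spq (p q : ℕ) (hp : p.Prime) (hq : q.Prime) (hpq : p ≠ q) :
    (∀ i : ℕ, 1 ≤ i →
      (1 - 1 / (p : ℚ) ^ i) ∉ AddSubsemigroup.closure
        ({x : ℚ | ∃ k : ℕ, 1 ≤ k ∧ k ≠ i ∧ x = 1 - 1 / (p : ℚ) ^ k} ∪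
         {x : ℚ | ∃ j : ℕ, 1 ≤ j ∧ x = 2 - 1 / (q : ℚ) ^ j})) ∧
    (∀ j : ℕ, 1 ≤ j →
      (2 - 1 / (q : ℚ) ^ j) ∉ AddSubsemigroup.closure
        ({x : ℚ | ∃ i : ℕ, 1 ≤ i ∧ x = 1 - 1 / (p : ℚ) ^ i} ∪
         {x : ℚ | ∃ k : ℕ, 1 ≤ k ∧ k ≠ j ∧ x = 2 - 1 / (q : ℚ) ^ k})) := by
  have := Fact.mk hq
  have hp2 : (2 : ℚ) ≤ p := mod_cast hp.two_le
  have hq2 : (2 : ℚ) ≤ q := mod_cast hq.two_le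
  have hγ : ∀ k, 1 ≤ k → 1 / 2 ≤ 1 - 1 / (p : ℚ) ^ k := fun k hk =>
    half_le_one_sub_one_div_pow hp2 (by omega)
  have hδ : ∀ k, 1 ≤ k → 3 / 2 ≤ 2 - 1 / (q : ℚ) ^ k := fun k hk => by
    linarith [half_le_one_sub_one_div_pow hq2 (by omega : k ≠ 0)]
  have hpos : ∀ (x : ℚ) k, 2 ≤ x → 0 < 1 / x ^ k := fun x k hx => by positivity
  constructor
  · intro i hi hmem
    rcases AddSubsemigroup.mem_or_add_le_of_mem_closure (a := 1 / 2) (by norm_num)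
      (by rintro _ (⟨k, hk, -, rfl⟩ | ⟨k, hk, rfl⟩) <;> linarith [hγ k hk, hδ k hk]) hmem with
      (⟨k, -, hki, hk⟩ | ⟨k, hk, hk'⟩) | hle
    · exact hki ((sub_one_div_pow_inj (by linarith) 1).1 hk.symm)
    · linarith [hδ k hk, hpos p i hp2]
    · linarith [hpos p i hp2]
  · intro j hj hmem
    rcases AddSubsemigroup.mem_closure_or_mem_or_add_le_of_mem_closure_union
      (a := 1 / 2) (b := 3 / 2) (by norm_num) (by norm_num)
      (by rintro _ ⟨k, hk, rfl⟩; exact hγ k hk) (by rintro _ ⟨k, hk, -, rfl⟩; exact hδ k hk) hmem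
      with hΓ | ⟨k, -, hkj, hk⟩ | hle
    · have hqp : ¬q ∣ p := fun h => hpq ((Nat.prime_dvd_prime_iff_eq hq hp).1 h).symm
      exact (one_lt_padicNorm_two_sub_one_div_pow (by omega)).not_ge <|
        padicNorm_le_one_of_mem_closure
          (by rintro _ ⟨i, -, rfl⟩; exact padicNorm_one_sub_one_div_pow_le_one hqp i) hΓ
    · exact hkj ((sub_one_div_pow_inj (by linarith) 2).1 hk.symm)
    · linarith [hpos q j hq2]
end

section
/- Let K be a field and Γ a linearly ordered abelian group containing a positive element. Suppose R ⊆ K((t^Γ)) is a local ring essentially of finite type over K (a localization of a finitely generated K-subalgebra of K((t^Γ)) at a prime ideal) which is dominated by the t-adic valuation ν of K((t^Γ)), i.e. ν(f) ≥ 0 for all f ∈ R and ν(f) > 0 exactly when f lies in the maximal ideal of R. Then there exists z̲ ∈ K((t^Γ)) which is transcendental over the quotient field of R. -/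
/-!
`K((t^Γ))` has uncountable transcendence degree over `K`. Indeed `t ↦ t^g` (for `g > 0`) embeds
`K[[t]]`, and over the countable prime field `F` the uncountable domain `F[[t]]` has uncountable
transcendence degree. An `F`-algebraically independent family in `F[[t]]` stays algebraically
independent over `K` in `K[[t]]`: its monomials are `F`-linearly independent sequences with entries
in `F`, and such sequences stay `K`-linearly independent. On the other hand, the quotient field of
`R` lies in the subfield generated by the finitely many generators of `A`, which has finite
transcendence degree, so some element of `K((t^Γ))` is transcendental over it.
-/

universe u v

open Cardinal MvPolynomial Algebra HahnSeries

theorem LinearIndependent.algebraMap_comp_pi {F K α κ : Type*} [Field F] [Field K] [Algebra F K]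
    {v : κ → α → F} (hv : LinearIndependent F v) :
    LinearIndependent K fun k a => algebraMap F K (v k a) := by
  classical
  -- read a `K`-relation off coordinatewise in an `F`-basis of `K`
  let b := Module.Basis.ofVectorSpace F K
  rw [linearIndependent_iff'] at hv ⊢
  intro s c hc k hk
  refine b.repr.map_eq_zero_iff.1 (Finsupp.ext fun j => ?_)
  refine hv s (fun k => b.repr (c k) j) (funext fun a => ?_) k hk
  have := congrArg (fun f => b.repr (f a) j) hc
  simp only [Finset.sum_apply, Pi.smul_apply, smul_eq_mul, mul_comm (c _), ← Algebra.smul_def,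
    map_sum, map_smul, Finsupp.coe_finsetSum, Finsupp.smul_apply] at this
  simpa [mul_comm] using this

theorem algebraicIndependent_iff_linearIndependent_monomials {R A ι : Type*} [CommRing R]
    [CommRing A] [Algebra R A] {x : ι → A} :
    AlgebraicIndependent R x ↔
      LinearIndependent R fun m : ι →₀ ℕ => aeval x (monomial m (1 : R)) := by
  refine ⟨fun hx => ?_, fun hx => ?_⟩
  · exact (basisMonomials ι R).linearIndependent.map' (aeval x).toLinearMap
      (LinearMap.ker_eq_bot.2 hx)
  · have h : (basisMonomials ι R).constr R (fun m => aeval x (monomial m (1 : R))) =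
        (aeval x).toLinearMap :=
      (basisMonomials ι R).ext fun m => by
        rw [Module.Basis.constr_basis, coe_basisMonomials]; rfl
    have := (basisMonomials ι R).injective_constr_of_linearIndependent (R₂ := R) hx
    rwa [h] at this

theorem AlgebraicIndependent.powerSeries_map {F K ι : Type*} [Field F] [Field K] [Algebra F K]
    {x : ι → PowerSeries F} (hx : AlgebraicIndependent F x) :
    AlgebraicIndependent K fun i => PowerSeries.map (algebraMap F K) (x i) := by
  rw [algebraicIndependent_iff_linearIndependent_monomials] at hx ⊢
  have hcoeffs : LinearMap.ker (LinearMap.pi fun n => PowerSeries.coeff (R := F) n) = ⊥ :=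
    LinearMap.ker_eq_bot.2 fun f g h => PowerSeries.ext (congrFun h)
  refine LinearIndependent.of_comp
    (LinearMap.pi fun n => PowerSeries.coeff n : PowerSeries K →ₗ[K] ℕ → K) ?_
  convert (hx.map' _ hcoeffs).algebraMap_comp_pi (K := K) using 1
  · ext m n
    simp only [Function.comp_apply, LinearMap.pi_apply, aeval_monomial, map_one, one_mul,
      ← map_pow, ← map_finsuppProd, PowerSeries.coeff_map]
  all_goals rfl

theorem aleph0_lt_trdeg_of_countable (F : Type u) (E : Type v) [Field F] [Countable F] [CommRing E]
    [IsDomain E] [Algebra F E] [Uncountable E] : ℵ₀ < trdeg F E := by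
  obtain ⟨ι, x, hx⟩ := exists_isTranscendenceBasis' F E
  rw [← hx.cardinalMk_eq_trdeg]
  by_contra! hι
  have hF : lift.{v} #F ≤ ℵ₀ := lift_le_aleph0.2 mk_le_aleph0
  suffices #E ≤ ℵ₀ from (aleph0_lt_mk_iff.2 ‹_›).not_ge this
  cases isEmpty_or_nonempty ι with
  | inl hempty =>
    have := hx.isEmpty_iff_isAlgebraic.1 hempty
    exact lift_le_aleph0.1 <| (IsAlgebraic.lift_cardinalMk_le_max F E).trans (max_le hF le_rfl)
  | inr _ =>
    refine lift_le_aleph0.1 (hx.lift_cardinalMk_eq_max_lift.trans_le ?_)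
    exact max_le (max_le hF (lift_le_aleph0.2 hι)) le_rfl

theorem PowerSeries.uncountable (R : Type*) [Semiring R] [Nontrivial R] :
    Uncountable (PowerSeries R) := by
  rw [← aleph0_lt_mk_iff]
  calc ℵ₀ < 2 ^ ℵ₀ := cantor _
    _ ≤ #R ^ ℵ₀ := power_le_power_right (two_le_iff.2 ⟨0, 1, zero_ne_one⟩)
    _ = #(ℕ → R) := by simp
    _ ≤ #(PowerSeries R) := mk_le_of_injective (f := PowerSeries.mk) fun f g h => by
      funext n; simpa using congrArg (PowerSeries.coeff n) h

theorem PowerSeries.aleph0_lt_trdeg (K : Type*) [Field K] : ℵ₀ < trdeg K (PowerSeries K) := by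
  let F := (⊥ : Subfield K)
  have : Countable F := mk_le_aleph0_iff.1 <| by
    simpa using Subfield.cardinalMk_closure_le_max (∅ : Set K)
  have : Uncountable (PowerSeries F) := PowerSeries.uncountable F
  obtain ⟨ι, x, hx⟩ := exists_isTranscendenceBasis' F (PowerSeries F)
  calc ℵ₀ < #ι := hx.cardinalMk_eq_trdeg ▸ aleph0_lt_trdeg_of_countable F (PowerSeries F)
    _ ≤ trdeg K (PowerSeries K) := (hx.1.powerSeries_map (K := K)).cardinalMk_le_trdeg

theorem HahnSeries.aleph0_lt_trdeg {Γ K : Type*} [AddCommMonoid Γ] [PartialOrder Γ]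
    [IsOrderedCancelAddMonoid Γ] [Field K] {g : Γ} (hg : 0 < g) :
    ℵ₀ < trdeg K (HahnSeries Γ K) := by
  have hmono : StrictMono (multiplesHom Γ g) := fun _ _ h => nsmul_lt_nsmul_left hg h
  let φ : PowerSeries K →ₐ[K] HahnSeries Γ K :=
    { (embDomainRingHom (multiplesHom Γ g) hmono.injective fun _ _ => hmono.le_iff_le).comp
        (ofPowerSeries ℕ K) with
      commutes' := fun r => by simp [ofPowerSeries_C, HahnSeries.algebraMap_apply] }
  have hφ : Function.Injective φ := embDomain_injective.comp ofPowerSeries_injective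
  exact aleph0_lt_lift.1 <| (aleph0_lt_lift.2 (PowerSeries.aleph0_lt_trdeg K)).trans_le
    (lift_trdeg_le_of_injective φ hφ)

open IntermediateField.algebraAdjoinAdjoin in
theorem exists_transcendental_intermediateField_adjoin {K E : Type*} [Field K] [Field E]
    [Algebra K E] (h : ℵ₀ ≤ trdeg K E) {s : Set E} (hs : s.Finite) :
    ∃ a : E, Transcendental (IntermediateField.adjoin K s) a := by
  by_contra! hs'
  have : Algebra.IsAlgebraic (IntermediateField.adjoin K s) E :=
    ⟨fun a => not_not.1 (hs' a)⟩
  have := Algebra.IsAlgebraic.trans (adjoin K s) (IntermediateField.adjoin K s) E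
  exact ((IsAlgebraic.trdeg_le_cardinalMk K s).trans_lt (lt_aleph0_iff_set_finite.2 hs)).not_ge h

theorem Transcendental.eval_ne_zero_of_coeff_mem_range {A B : Type*} [CommRing A] [CommRing B]
    [Algebra A B] {b : B} (hb : Transcendental A b) {G : Polynomial B} (hG : G ≠ 0)
    (hcoeff : ∀ k, G.coeff k ∈ (algebraMap A B).range) : G.eval b ≠ 0 := by
  obtain ⟨G, rfl⟩ := (Polynomial.lifts_iff_coeff_lifts _).2 hcoeff
  rw [Polynomial.coe_mapRingHom, Polynomial.eval_map_algebraMap]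
  exact fun h => hb ⟨G, by rintro rfl; simp at hG, h⟩

theorem exists_transcendental_over_essentially_finite_type_general
    (K Γ : Type) [Field K] [AddCommGroup Γ] [LinearOrder Γ] [IsOrderedAddMonoid Γ]
    (hΓ : ∃ g : Γ, 0 < g)
    (A : Subalgebra K (HahnSeries Γ K)) (hA : A.FG)
    (P : Ideal A)
    (R : Set (HahnSeries Γ K))
    (hR : R = {f | ∃ a b : A, b ∉ P ∧ f = (a : HahnSeries Γ K) / (b : HahnSeries Γ K)}) :
    ∃ zbar : HahnSeries Γ K, ∀ G : Polynomial (HahnSeries Γ K), G ≠ 0 →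
      (∀ k, G.coeff k ∈ {q : HahnSeries Γ K | ∃ u ∈ R, ∃ v ∈ R, v ≠ 0 ∧ q = u / v}) →
      Polynomial.eval zbar G ≠ 0 := by
  obtain ⟨g, hg⟩ := hΓ
  obtain ⟨T, rfl⟩ := hA
  have hRL : R ⊆ IntermediateField.adjoin K (T : Set (HahnSeries Γ K)) := by
    rw [hR]
    rintro _ ⟨a, b, -, rfl⟩
    have hAL := IntermediateField.algebra_adjoin_le_adjoin K (T : Set (HahnSeries Γ K))
    exact div_mem (hAL a.2) (hAL b.2)
  obtain ⟨zbar, hz⟩ := exists_transcendental_intermediateField_adjoin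
    (HahnSeries.aleph0_lt_trdeg hg).le T.finite_toSet
  refine ⟨zbar, fun G hG hcoeff => hz.eval_ne_zero_of_coeff_mem_range hG fun k => ?_⟩
  obtain ⟨u, hu, v, hv, -, huv⟩ := hcoeff k
  exact ⟨⟨_, div_mem (hRL hu) (hRL hv)⟩, huv.symm⟩

/-- Let `K` be a field and `Γ` a linearly ordered abelian group containing a positive
element.  Suppose `R ⊆ K((t^Γ))` is a local ring essentially of finite type over `K` — the
localization `A_P` of a finitely generated `K`-subalgebra `A` of `K((t^Γ))` at a prime ideal
`P` — which is dominated by the `t`-adic valuation `ν` of `K((t^Γ))` (`ν ≥ 0` on `R`, with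
`ν > 0` exactly on the maximal ideal `P·A_P`).  Then there exists `z̄ ∈ K((t^Γ))` which is
transcendental over the quotient field of `R`. -/
theorem exists_transcendental_over_essentially_finite_type
    (K Γ : Type) [Field K] [AddCommGroup Γ] [LinearOrder Γ] [IsOrderedAddMonoid Γ]
    (hΓ : ∃ g : Γ, 0 < g)
    (A : Subalgebra K (HahnSeries Γ K)) (hA : A.FG)
    (P : Ideal A) (hP : P.IsPrime)
    (R : Set (HahnSeries Γ K))
    (hR : R = {f | ∃ a b : A, b ∉ P ∧ f = (a : HahnSeries Γ K) / (b : HahnSeries Γ K)})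
    (hdom₁ : ∀ f ∈ R, 0 ≤ f.orderTop)
    (hdom₂ : ∀ f ∈ R, (0 < f.orderTop ↔
      ∃ a b : A, a ∈ P ∧ b ∉ P ∧ f = (a : HahnSeries Γ K) / (b : HahnSeries Γ K))) :
    ∃ zbar : HahnSeries Γ K, ∀ G : Polynomial (HahnSeries Γ K), G ≠ 0 →
      (∀ k, G.coeff k ∈ {q : HahnSeries Γ K | ∃ u ∈ R, ∃ v ∈ R, v ≠ 0 ∧ q = u / v}) →
      Polynomial.eval zbar G ≠ 0 :=
  exists_transcendental_over_essentially_finite_type_general K Γ hΓ A hA P R hR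
end

section
/- Let (a_i)_{i ≥ 3} and (b_i)_{i ≥ 3} be sequences of positive integers with b_{i+1} > b_i for all i ≥ 3, and, setting a_2 = 0, suppose the ratios (a_{i+1} − a_i)/b_{i+1} are positive and strictly increasing with i for i ≥ 2. In ℤ² define γ_1 = (0,1), γ_2 = (1,0), and γ_i = (b_i, a_{i−1} − a_i) for i ≥ 3. Then for every i ≥ 4, no positive integer multiple of γ_i belongs to the subsemigroup S_{i−1} of (ℤ², +) generated by γ_1, …, γ_{i−1}; indeed, γ_i lies outside the cone with vertex 0 generated by γ_1, …, γ_{i−1} in ℝ². -/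
/-!
The vector `ν = (a_i - a_{i-1}, b_i)` is orthogonal to `γ_i = (b_i, -(a_i - a_{i-1}))`, while it
pairs positively with `γ_1, …, γ_{i-1}`: for `γ_1, γ_2` because `b_i > 0` and `a_i > a_{i-1}`, and
for `3 ≤ j < i` because `⟪ν, γ_j⟫ > 0` is the cross-multiplied inequality
`(a_j - a_{j-1}) / b_j < (a_i - a_{i-1}) / b_i` between the increasing ratios. Hence `⟪ν, ·⟫` is
positive on the semigroup `S_{i-1}`, and on the cone it vanishes only at `0`; but it vanishes at the
nonzero vector `γ_i` and at all its multiples.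
-/

open Finset

theorem AddSubsemigroup.map_pos_of_mem_closure {M N F : Type*} [Add M] [AddZeroClass N]
    [Preorder N] [AddLeftStrictMono N] [FunLike F M N] [AddHomClass F M N] (f : F) {s : Set M}
    (hs : ∀ x ∈ s, 0 < f x) {x : M} (hx : x ∈ closure s) : 0 < f x :=
  closure_induction hs (fun x y _ _ hx hy => (map_add f x y).symm ▸ add_pos hx hy) hx

theorem sum_smul_eq_zero_of_map_sum_nonpos {𝕜 E ι : Type*} [Semiring 𝕜] [LinearOrder 𝕜]
    [IsStrictOrderedRing 𝕜] [AddCommMonoid E] [Module 𝕜 E] [Fintype ι] (f : E →ₗ[𝕜] 𝕜)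
    {v : ι → E} {c : ι → 𝕜} (hc : ∀ j, 0 ≤ c j) (hv : ∀ j, 0 < f (v j))
    (h : f (∑ j, c j • v j) ≤ 0) : ∑ j, c j • v j = 0 := by
  simp only [map_sum, map_smul, smul_eq_mul] at h
  have hterms : ∀ j ∈ univ, c j * f (v j) = 0 :=
    (sum_eq_zero_iff_of_nonneg fun j _ => mul_nonneg (hc j) (hv j).le).mp
      (h.antisymm (sum_nonneg fun j _ => mul_nonneg (hc j) (hv j).le))
  refine sum_eq_zero fun j hj => ?_
  have hcj : c j = 0 := by
    by_contra hne
    exact (mul_pos ((hc j).lt_of_ne' hne) (hv j)).ne' (hterms j hj)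
  rw [hcj, zero_smul]

section StepRatio

variable (a b : ℕ → ℤ)

def stepRatio (i : ℕ) : ℚ := (a (i + 1) - a i : ℚ) / (b (i + 1) : ℚ)

variable {a b}

theorem stepRatio_lt_stepRatio (hmono : ∀ i, 2 ≤ i → stepRatio a b i < stepRatio a b (i + 1))
    {m n : ℕ} (hm : 2 ≤ m) (hmn : m < n) : stepRatio a b m < stepRatio a b n := by
  have hstrict : StrictMono fun k => stepRatio a b (k + 2) :=
    strictMono_nat_of_lt_succ fun k => hmono (k + 2) (by omega)
  simpa [Nat.sub_add_cancel hm, Nat.sub_add_cancel (hm.trans hmn.le)] using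
    hstrict (show m - 2 < n - 2 by omega)

theorem mul_lt_mul_of_stepRatio_lt {m n : ℕ} (hm : 0 < b (m + 1)) (hn : 0 < b (n + 1))
    (h : stepRatio a b m < stepRatio a b n) :
    (a (m + 1) - a m) * b (n + 1) < (a (n + 1) - a n) * b (m + 1) := by
  rw [stepRatio, stepRatio, div_lt_div_iff₀ (by exact_mod_cast hm) (by exact_mod_cast hn)] at h
  exact_mod_cast h

end StepRatio

theorem gamma_pairing_pos {a b : ℕ → ℤ} (hbpos : ∀ i, 3 ≤ i → 0 < b i)
    (hratiopos : ∀ i, 2 ≤ i → 0 < stepRatio a b i)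
    (hratiomono : ∀ i, 2 ≤ i → stepRatio a b i < stepRatio a b (i + 1))
    {γ : ℕ → ℤ × ℤ} (hγ1 : γ 1 = (0, 1)) (hγ2 : γ 2 = (1, 0))
    (hγ : ∀ i, 3 ≤ i → γ i = (b i, a (i - 1) - a i)) {i j : ℕ} (hi : 4 ≤ i)
    (hj : j ∈ Set.Icc 1 (i - 1)) : 0 < (a i - a (i - 1)) * (γ j).1 + b i * (γ j).2 := by
  obtain ⟨n, rfl⟩ : ∃ n, i = n + 1 := ⟨i - 1, by omega⟩
  simp only [Nat.add_sub_cancel, Set.mem_Icc] at hj ⊢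
  have hbi : 0 < b (n + 1) := hbpos (n + 1) (by omega)
  rcases show j = 1 ∨ j = 2 ∨ 3 ≤ j by omega with rfl | rfl | hj3
  · simpa [hγ1] using hbi
  · have hratio := hratiopos n (by omega)
    rw [stepRatio, div_pos_iff_of_pos_right (by exact_mod_cast hbi), sub_pos] at hratio
    simpa [hγ2] using (show a n < a (n + 1) by exact_mod_cast hratio)
  · obtain ⟨m, rfl⟩ : ∃ m, j = m + 1 := ⟨j - 1, by omega⟩
    have hcross := mul_lt_mul_of_stepRatio_lt (hbpos (m + 1) hj3) hbi
      (stepRatio_lt_stepRatio hratiomono (by omega) (by omega))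
    rw [hγ (m + 1) hj3, Nat.add_sub_cancel]
    linarith

theorem gamma_not_rationally_dependent_general
    (a b : ℕ → ℤ)
    (hbpos : ∀ i, 3 ≤ i → 0 < b i)
    (hratiopos : ∀ i, 2 ≤ i → 0 < ((a (i + 1) - a i : ℚ) / (b (i + 1) : ℚ)))
    (hratiomono : ∀ i, 2 ≤ i →
      ((a (i + 1) - a i : ℚ) / (b (i + 1) : ℚ)) < ((a (i + 2) - a (i + 1) : ℚ) / (b (i + 2) : ℚ)))
    (γ : ℕ → ℤ × ℤ)
    (hγ1 : γ 1 = (0, 1)) (hγ2 : γ 2 = (1, 0))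
    (hγ : ∀ i, 3 ≤ i → γ i = (b i, a (i - 1) - a i)) :
    ∀ i, 4 ≤ i →
      (∀ k : ℕ, 0 < k → k • γ i ∉ AddSubsemigroup.closure (γ '' Set.Icc 1 (i - 1))) ∧
      ¬ ∃ c : Fin (i - 1) → ℝ, (∀ j, 0 ≤ c j) ∧
          (((γ i).1 : ℝ), ((γ i).2 : ℝ)) =
            ∑ j : Fin (i - 1), c j • ((((γ ((j : ℕ) + 1)).1 : ℝ), ((γ ((j : ℕ) + 1)).2 : ℝ)) : ℝ × ℝ) := by
  intro i hi
  set A := a i - a (i - 1)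
  have hpos : ∀ j ∈ Set.Icc 1 (i - 1), 0 < A * (γ j).1 + b i * (γ j).2 := fun j hj =>
    gamma_pairing_pos hbpos hratiopos hratiomono hγ1 hγ2 hγ hi hj
  have horth : A * (γ i).1 + b i * (γ i).2 = 0 := by
    rw [hγ i (by omega)]
    ring
  refine ⟨fun k _ hk => ?_, fun ⟨c, hc, hsum⟩ => ?_⟩
  · let L : ℤ × ℤ →+ ℤ := A • AddMonoidHom.fst ℤ ℤ + b i • AddMonoidHom.snd ℤ ℤ
    have hL := AddSubsemigroup.map_pos_of_mem_closure L
      (by rintro _ ⟨j, hj, rfl⟩; simpa [L] using hpos j hj) hk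
    have hLγ : L (γ i) = 0 := by simpa [L] using horth
    rw [map_nsmul, hLγ, smul_zero] at hL
    exact hL.false
  · let L : ℝ × ℝ →ₗ[ℝ] ℝ := (A : ℝ) • LinearMap.fst ℝ ℝ ℝ + (b i : ℝ) • LinearMap.snd ℝ ℝ ℝ
    have hzero := sum_smul_eq_zero_of_map_sum_nonpos L hc
      (v := fun j : Fin (i - 1) => (((γ (j + 1)).1 : ℝ), ((γ (j + 1)).2 : ℝ)))
      (fun j => by simpa [L] using (Int.cast_pos (R := ℝ)).mpr (hpos (j + 1) ⟨by omega, by omega⟩))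
      (by rw [← hsum]; simpa [L] using (Int.cast_nonpos (R := ℝ)).mpr horth.le)
    rw [← hsum, hγ i (by omega)] at hzero
    simp only [Prod.mk_eq_zero, Int.cast_eq_zero] at hzero
    exact (hbpos i (by omega)).ne' hzero.1

/-- Example of a semigroup of a noetherian local ring which is not rationally finitely
generated: with `a_2 = 0` and sequences of positive integers `(a_i)_{i ≥ 3}`, `(b_i)_{i ≥ 3}`
such that `b_{i+1} > b_i` and the ratios `(a_{i+1} - a_i)/b_{i+1}` are positive and strictly
increasing, setting `γ_1 = (0,1)`, `γ_2 = (1,0)` and `γ_i = (b_i, a_{i-1} - a_i)` for `i ≥ 3`,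
no positive multiple of `γ_i` (for `i ≥ 4`) lies in the subsemigroup of `(ℤ², +)` generated by
`γ_1, …, γ_{i-1}`; indeed `γ_i` lies outside the cone with vertex `0` generated by
`γ_1, …, γ_{i-1}` in `ℝ²`. -/
theorem gamma_not_rationally_dependent
    (a b : ℕ → ℤ)
    (ha2 : a 2 = 0)
    (hapos : ∀ i, 3 ≤ i → 0 < a i)
    (hbpos : ∀ i, 3 ≤ i → 0 < b i)
    (hbmono : ∀ i, 3 ≤ i → b i < b (i + 1))
    (hratiopos : ∀ i, 2 ≤ i → 0 < ((a (i + 1) - a i : ℚ) / (b (i + 1) : ℚ)))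
    (hratiomono : ∀ i, 2 ≤ i →
      ((a (i + 1) - a i : ℚ) / (b (i + 1) : ℚ)) < ((a (i + 2) - a (i + 1) : ℚ) / (b (i + 2) : ℚ)))
    (γ : ℕ → ℤ × ℤ)
    (hγ1 : γ 1 = (0, 1)) (hγ2 : γ 2 = (1, 0))
    (hγ : ∀ i, 3 ≤ i → γ i = (b i, a (i - 1) - a i)) :
    ∀ i, 4 ≤ i →
      (∀ k : ℕ, 0 < k → k • γ i ∉ AddSubsemigroup.closure (γ '' Set.Icc 1 (i - 1))) ∧
      ¬ ∃ c : Fin (i - 1) → ℝ, (∀ j, 0 ≤ c j) ∧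
          (((γ i).1 : ℝ), ((γ i).2 : ℝ)) =
            ∑ j : Fin (i - 1), c j • ((((γ ((j : ℕ) + 1)).1 : ℝ), ((γ ((j : ℕ) + 1)).2 : ℝ)) : ℝ × ℝ) :=
  gamma_not_rationally_dependent_general a b hbpos hratiopos hratiomono γ hγ1 hγ2 hγ
end
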